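/- arXiv:2001.11496 — 6 statements merged into one kernel-verified Lean document; each statement's English description precedes it below -/
import Mathlib

section
/- Let n ≥ 2 and m = n − 1, and consider a connected tree graph on n nodes with m directed edges and the matrices K₀, K_L, Γ₁, Γ₂ and M_x defined as in the context. If any single one of the first n columns of M_x (a density-state column) is deleted, the resulting (n+2m)×(n+2m−1) matrix has full column rank n+2m−1. -/
open Matrix

/-- A connected, tree-structured natural gas pipeline network with `n` nodes and
`m` directed edges (lines).  Each edge `e` is directed from its tail node
`tail e` to its head node `head e`.  Distinct edges connect distinct unordered
pairs of nodes, and the underlying undirected simple graph is a (connected) tree. -/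
structure TreeNetwork (n m : ℕ) where
  tail : Fin m → Fin n
  head : Fin m → Fin n
  tail_ne_head : ∀ e, tail e ≠ head e
  edge_injective : Function.Injective fun e => s(tail e, head e)
  isTree : (SimpleGraph.fromEdgeSet (Set.range fun e => s(tail e, head e))).IsTree

namespace TreeNetwork

variable {n m : ℕ}

/-- The signed incidence matrix `E ∈ ℝ^{m×n}`: row `e` has `+1` at the tail node of
edge `e`, `-1` at the head node, and zeros elsewhere. -/
def Emat (T : TreeNetwork n m) : Matrix (Fin m) (Fin n) ℝ :=
  Matrix.of fun e v => if v = T.tail e then (1 : ℝ) else if v = T.head e then -1 else 0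

/-- `K₀ ∈ ℝ^{n×m}`: `K₀(i,j) = A j` if edge `j` leaves node `i`, and `0` otherwise. -/
def K0 (T : TreeNetwork n m) (A : Fin m → ℝ) : Matrix (Fin n) (Fin m) ℝ :=
  Matrix.of fun i j => if T.tail j = i then A j else 0

/-- `K_L ∈ ℝ^{n×m}`: `K_L(i,j) = -A j` if edge `j` enters node `i`, and `0` otherwise. -/
def KL (T : TreeNetwork n m) (A : Fin m → ℝ) : Matrix (Fin n) (Fin m) ℝ :=
  Matrix.of fun i j => if T.head j = i then -A j else 0

/-- The entrywise absolute value `|E|` of the signed incidence matrix. -/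
def EmatAbs (T : TreeNetwork n m) : Matrix (Fin m) (Fin n) ℝ :=
  Matrix.of fun e v => |T.Emat e v|

/-- `K̄₀ = (|E|ᵀ + Eᵀ)/2 ∈ ℝ^{n×m}`. -/
noncomputable def Kbar0 (T : TreeNetwork n m) : Matrix (Fin n) (Fin m) ℝ :=
  (2 : ℝ)⁻¹ • (T.EmatAbsᵀ + T.Ematᵀ)

/-- `K̄_l = (Eᵀ - |E|ᵀ)/2 ∈ ℝ^{n×m}`. -/
noncomputable def Kbarl (T : TreeNetwork n m) : Matrix (Fin n) (Fin m) ℝ :=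
  (2 : ℝ)⁻¹ • (T.Ematᵀ - T.EmatAbsᵀ)

/-- `Γ₁ = diag(l/2) ⬝ (K̄₀ᵀ diag(α) − K̄_lᵀ) ∈ ℝ^{m×n}`. -/
noncomputable def Gamma1 (T : TreeNetwork n m) (l : Fin m → ℝ) (α : Fin n → ℝ) :
    Matrix (Fin m) (Fin n) ℝ :=
  Matrix.diagonal (fun e => l e / 2) * (T.Kbar0ᵀ * Matrix.diagonal α - T.Kbarlᵀ)

/-- `Γ₂ = diag(l/2) ∈ ℝ^{m×m}`. -/
noncomputable def Gamma2 (l : Fin m → ℝ) : Matrix (Fin m) (Fin m) ℝ :=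
  Matrix.diagonal fun e => l e / 2

/-- The mass matrix `M_x = [[0, K₀, K_L], [Γ₁, 0, 0], [0, Γ₂, Γ₂]]`, whose first `n`
rows are the flux-conservation equations, next `m` rows the mass-continuity
equations, and last `m` rows the momentum equations; the first `n` columns
correspond to the density states, the next `m` to `φ₀`, the last `m` to `φ_l`. -/
noncomputable def Mx (T : TreeNetwork n m) (A l : Fin m → ℝ) (α : Fin n → ℝ) :
    Matrix (Fin n ⊕ (Fin m ⊕ Fin m)) (Fin n ⊕ (Fin m ⊕ Fin m)) ℝ :=
  Matrix.fromBlocks 0 (Matrix.fromCols (T.K0 A) (T.KL A))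
    (Matrix.fromRows (T.Gamma1 l α) 0)
    (Matrix.fromBlocks 0 0 (Gamma2 l) (Gamma2 l))

end TreeNetwork

section Aux

namespace TreeNetwork

variable {n m : ℕ} (T : TreeNetwork n m)

/-- The underlying simple graph of the network. -/
private abbrev Gr (T : TreeNetwork n m) : SimpleGraph (Fin n) :=
  SimpleGraph.fromEdgeSet (Set.range fun e => s(T.tail e, T.head e))

private lemma adj_edge (e : Fin m) : (Gr T).Adj (T.tail e) (T.head e) := by
  rw [SimpleGraph.fromEdgeSet_adj]
  exact ⟨⟨e, rfl⟩, T.tail_ne_head e⟩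

private lemma prop_all (P : Fin n → Prop)
    (h1 : ∀ e, P (T.tail e) → P (T.head e))
    (h2 : ∀ e, P (T.head e) → P (T.tail e))
    (r : Fin n) (hr : P r) : ∀ v, P v := by
  have key : ∀ (a b : Fin n), (Gr T).Walk a b → P a → P b := by
    intro a b w
    induction w with
    | nil => exact id
    | cons h p ih =>
      intro ha
      apply ih
      rw [SimpleGraph.fromEdgeSet_adj] at h
      obtain ⟨⟨e, he⟩, -⟩ := h
      rw [Sym2.eq_iff] at he
      rcases he with ⟨ht, hh⟩ | ⟨ht, hh⟩
      · subst ht; subst hh; exact h1 e ha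
      · subst ht; subst hh; exact h2 e ha
  intro v
  obtain ⟨w⟩ := T.isTree.isConnected.preconnected r v
  exact key r v w hr

private lemma emat_entry (e : Fin m) (v : Fin n) :
    T.Emat e v = (if v = T.tail e then (1:ℝ) else 0) - (if v = T.head e then 1 else 0) := by
  have hne := T.tail_ne_head e
  have hne' := hne.symm
  simp only [Emat, Matrix.of_apply]
  rcases eq_or_ne v (T.tail e) with h1 | h1 <;> rcases eq_or_ne v (T.head e) with h2 | h2 <;>
    simp_all

private lemma ematAbs_entry (e : Fin m) (v : Fin n) :
    T.EmatAbs e v = (if v = T.tail e then (1:ℝ) else 0) + (if v = T.head e then 1 else 0) := by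
  have hne := T.tail_ne_head e
  have hne' := hne.symm
  simp only [EmatAbs, Emat, Matrix.of_apply]
  rcases eq_or_ne v (T.tail e) with h1 | h1 <;> rcases eq_or_ne v (T.head e) with h2 | h2 <;>
    simp_all

private lemma kbar0_entry (i : Fin n) (e : Fin m) :
    T.Kbar0 i e = if i = T.tail e then (1:ℝ) else 0 := by
  simp only [Kbar0, Matrix.smul_apply, Matrix.add_apply, Matrix.transpose_apply,
    T.ematAbs_entry, T.emat_entry, smul_eq_mul]
  split_ifs <;> norm_num

private lemma kbarl_entry (i : Fin n) (e : Fin m) :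
    T.Kbarl i e = if i = T.head e then (-1:ℝ) else 0 := by
  simp only [Kbarl, Matrix.smul_apply, Matrix.sub_apply, Matrix.transpose_apply,
    T.ematAbs_entry, T.emat_entry, smul_eq_mul]
  split_ifs <;> norm_num

private lemma gamma1_entry (l : Fin m → ℝ) (α : Fin n → ℝ) (e : Fin m) (i : Fin n) :
    T.Gamma1 l α e i
      = l e / 2 * ((if i = T.tail e then α i else 0) + (if i = T.head e then 1 else 0)) := by
  simp only [Gamma1, Matrix.diagonal_mul, Matrix.sub_apply, Matrix.mul_diagonal,
    Matrix.transpose_apply, T.kbar0_entry, T.kbarl_entry]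
  split_ifs <;> ring

private lemma emat_mulVec (x : Fin n → ℝ) (e : Fin m) :
    T.Emat.mulVec x e = x (T.tail e) - x (T.head e) := by
  simp only [Matrix.mulVec, dotProduct, T.emat_entry, sub_mul, ite_mul, one_mul, zero_mul,
    Finset.sum_sub_distrib, Finset.sum_ite_eq', Finset.mem_univ, if_true]

private lemma ematT_mulVec_injective (hnm : n = m + 1) :
    ∀ z : Fin m → ℝ, T.Ematᵀ.mulVec z = 0 → z = 0 := by
  have h1 : LinearMap.ker T.Emat.mulVecLin
      = Submodule.span ℝ {(fun _ => 1 : Fin n → ℝ)} := by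
    apply le_antisymm
    · intro x hx
      rw [LinearMap.mem_ker, Matrix.mulVecLin_apply] at hx
      have hx' : ∀ e, x (T.tail e) = x (T.head e) := by
        intro e
        have := congrFun hx e
        rw [T.emat_mulVec, Pi.zero_apply, sub_eq_zero] at this
        exact this
      have hconst : ∀ v, x v = x ⟨0, by omega⟩ :=
        T.prop_all (fun v => x v = x ⟨0, by omega⟩)
          (fun e h => (hx' e).symm.trans h) (fun e h => (hx' e).trans h)
          ⟨0, by omega⟩ rfl
      have hxe : x = x ⟨0, by omega⟩ • (fun _ => 1 : Fin n → ℝ) := by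
        funext v; simp [hconst v]
      rw [hxe]
      exact Submodule.smul_mem _ _ (Submodule.mem_span_singleton_self _)
    · rw [Submodule.span_le, Set.singleton_subset_iff, SetLike.mem_coe, LinearMap.mem_ker,
        Matrix.mulVecLin_apply]
      funext e
      rw [T.emat_mulVec]
      simp
  have hone : (fun _ => (1:ℝ) : Fin n → ℝ) ≠ 0 := by
    intro h
    have := congrFun h ⟨0, by omega⟩
    norm_num at this
  have hk1 : Module.finrank ℝ (LinearMap.ker T.Emat.mulVecLin) = 1 := by
    rw [h1]; exact finrank_span_singleton hone
  have hrE : T.Emat.rank = m := by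
    have h2 := LinearMap.finrank_range_add_finrank_ker T.Emat.mulVecLin
    rw [hk1, Module.finrank_pi] at h2
    have h3 : T.Emat.rank = Module.finrank ℝ (LinearMap.range T.Emat.mulVecLin) := rfl
    rw [h3]
    simp only [Fintype.card_fin] at h2
    omega
  have hrT : T.Ematᵀ.rank = m := by rw [Matrix.rank_transpose]; exact hrE
  have hker : LinearMap.ker T.Ematᵀ.mulVecLin = ⊥ := by
    have h2 := LinearMap.finrank_range_add_finrank_ker T.Ematᵀ.mulVecLin
    rw [Module.finrank_pi] at h2
    have h3 : T.Ematᵀ.rank = Module.finrank ℝ (LinearMap.range T.Ematᵀ.mulVecLin) := rfl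
    rw [h3] at hrT
    simp only [Fintype.card_fin] at h2
    have h4 : Module.finrank ℝ (LinearMap.ker T.Ematᵀ.mulVecLin) = 0 := by omega
    exact Submodule.finrank_eq_zero.mp h4
  intro z hz
  rw [LinearMap.ker_eq_bot'] at hker
  exact hker z (by rw [Matrix.mulVecLin_apply]; exact hz)

private lemma factA (hnm : n = m + 1) (A : Fin m → ℝ) (hA : ∀ j, 0 < A j)
    (y : Fin m → ℝ)
    (hy : ∀ i, (∑ j, if T.tail j = i then A j * y j else 0)
      + (∑ j, if T.head j = i then A j * y j else 0) = 0) : y = 0 := by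
  rcases Nat.eq_zero_or_pos m with hm0 | hm0
  · subst hm0; funext j; exact j.elim0
  -- construct the sign function via path lengths from a root
  have hup := T.isTree.existsUnique_path
  set root : Fin n := T.tail ⟨0, hm0⟩ with hroot
  let p : ∀ v, (Gr T).Walk root v := fun v => (hup root v).exists.choose
  have hp : ∀ v, (p v).IsPath := fun v => (hup root v).exists.choose_spec
  let σ : Fin n → ℝ := fun v => (-1 : ℝ) ^ (p v).length
  have hσ0 : ∀ v, σ v ≠ 0 := fun v => pow_ne_zero _ (by norm_num)
  have hσadj : ∀ u v, (Gr T).Adj u v → σ v = -σ u := by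
    intro u v h
    by_cases hv : v ∈ (p u).support
    · have h1 : (p u).dropUntil v hv = SimpleGraph.Walk.cons h.symm SimpleGraph.Walk.nil :=
        (hup v u).unique ((hp u).dropUntil hv) (SimpleGraph.Path.singleton h.symm).2
      have h2 : (p u).takeUntil v hv = p v := (hup root v).unique ((hp u).takeUntil hv) (hp v)
      have h3 : (p u).length = (p v).length + 1 := by
        conv_lhs => rw [← SimpleGraph.Walk.take_spec (p u) hv]
        rw [SimpleGraph.Walk.length_append, h1, h2]
        simp
      show (-1:ℝ) ^ (p v).length = -(-1:ℝ) ^ (p u).length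
      rw [h3, pow_succ]; ring
    · have hp' : ((p u).concat h).IsPath := by
        rw [← SimpleGraph.Walk.isPath_reverse_iff, SimpleGraph.Walk.reverse_concat]
        exact (hp u).reverse.cons (by rw [SimpleGraph.Walk.support_reverse]; simpa using hv)
      have h2 : (p u).concat h = p v := (hup root v).unique hp' (hp v)
      have h3 : (p v).length = (p u).length + 1 := by
        rw [← h2, SimpleGraph.Walk.length_concat]
      show (-1:ℝ) ^ (p v).length = -(-1:ℝ) ^ (p u).length
      rw [h3, pow_succ]; ring
  set z : Fin m → ℝ := fun j => σ (T.tail j) * (A j * y j) with hzdef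
  have hz : T.Ematᵀ.mulVec z = 0 := by
    funext i
    have hyi := hy i
    simp only [Matrix.mulVec, dotProduct, Matrix.transpose_apply, T.emat_entry, sub_mul,
      ite_mul, one_mul, zero_mul, Finset.sum_sub_distrib, Pi.zero_apply]
    have e1 : ∀ j, (if i = T.tail j then z j else 0)
        = σ i * (if T.tail j = i then A j * y j else 0) := by
      intro j
      rcases eq_or_ne i (T.tail j) with h | h
      · rw [if_pos h, if_pos h.symm]
        simp only [hzdef]
        rw [← h]
      · rw [if_neg h, if_neg (Ne.symm h), mul_zero]
    have e2 : ∀ j, (if i = T.head j then z j else 0)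
        = -(σ i * (if T.head j = i then A j * y j else 0)) := by
      intro j
      rcases eq_or_ne i (T.head j) with h | h
      · rw [if_pos h, if_pos h.symm]
        have hσh : σ (T.head j) = -σ (T.tail j) := hσadj _ _ (T.adj_edge j)
        have hσt : σ (T.tail j) = -σ i := by rw [h, hσh]; ring
        simp only [hzdef]
        rw [hσt]; ring
      · rw [if_neg h, if_neg (Ne.symm h), mul_zero, neg_zero]
    calc (∑ j, if i = T.tail j then z j else 0) - (∑ j, if i = T.head j then z j else 0)
        = (∑ j, σ i * (if T.tail j = i then A j * y j else 0))
          - ∑ j, -(σ i * (if T.head j = i then A j * y j else 0)) := by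
          rw [Finset.sum_congr rfl (fun j _ => e1 j), Finset.sum_congr rfl (fun j _ => e2 j)]
      _ = σ i * ((∑ j, if T.tail j = i then A j * y j else 0)
          + (∑ j, if T.head j = i then A j * y j else 0)) := by
          rw [Finset.sum_neg_distrib, sub_neg_eq_add, ← Finset.mul_sum, ← Finset.mul_sum,
            ← mul_add]
      _ = 0 := by rw [hyi, mul_zero]
  have hz0 := T.ematT_mulVec_injective hnm z hz
  funext j
  have hj := congrFun hz0 j
  simp only [hzdef, Pi.zero_apply] at hj
  rcases mul_eq_zero.mp hj with h | h
  · exact absurd h (hσ0 _)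
  · rcases mul_eq_zero.mp h with h' | h'
    · exact absurd h' (ne_of_gt (hA j))
    · exact h'

private lemma factB (α : Fin n → ℝ) (hα : ∀ i, 0 < α i) (x : Fin n → ℝ) (r : Fin n)
    (hx : ∀ e, α (T.tail e) * x (T.tail e) + x (T.head e) = 0) (hr : x r = 0) : x = 0 := by
  have key := T.prop_all (fun v => x v = 0)
    (fun e h => by have he := hx e; rw [h, mul_zero, zero_add] at he; exact he)
    (fun e h => by
      have he := hx e
      rw [h, add_zero] at he
      exact (mul_eq_zero.mp he).resolve_left (ne_of_gt (hα _)))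
    r hr
  funext v; exact key v

end TreeNetwork

end Aux

/-- Deleting any single density-state column (one of the first `n`
columns, i.e. a column `Sum.inl r`) from the mass matrix `M_x` yields a matrix of
full column rank `n + 2m - 1`. -/
theorem mass_matrix_delete_density_column_full_rank
    (n m : ℕ) (hn : 2 ≤ n) (hm : m = n - 1)
    (T : TreeNetwork n m) (A l : Fin m → ℝ) (α : Fin n → ℝ)
    (hA : ∀ j, 0 < A j) (hl : ∀ e, 0 < l e) (hα : ∀ i, 0 < α i)
    (r : Fin n) :
    ((T.Mx A l α).submatrix id
      (Subtype.val : {c : Fin n ⊕ (Fin m ⊕ Fin m) // c ≠ Sum.inl r} →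
        Fin n ⊕ (Fin m ⊕ Fin m))).rank = n + 2 * m - 1 := by
  have hnm : n = m + 1 := by omega
  set M := ((T.Mx A l α).submatrix id
      (Subtype.val : {c : Fin n ⊕ (Fin m ⊕ Fin m) // c ≠ Sum.inl r} →
        Fin n ⊕ (Fin m ⊕ Fin m))) with hMdef
  have hinj : Function.Injective M.mulVecLin := by
    rw [← LinearMap.ker_eq_bot, LinearMap.ker_eq_bot']
    intro v hv
    rw [Matrix.mulVecLin_apply] at hv
    set w : Fin n ⊕ (Fin m ⊕ Fin m) → ℝ :=
      fun c => if hc : c = Sum.inl r then 0 else v ⟨c, hc⟩ with hwdef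
    have hvw : ∀ c : {c : Fin n ⊕ (Fin m ⊕ Fin m) // c ≠ Sum.inl r}, v c = w c.1 := by
      intro c
      simp only [hwdef]
      rw [dif_neg c.2]
    have hMw : (T.Mx A l α).mulVec w = 0 := by
      funext i
      have hvi := congrFun hv i
      rw [Matrix.mulVec, dotProduct, Pi.zero_apply] at hvi
      rw [Matrix.mulVec, dotProduct, Pi.zero_apply]
      rw [← Finset.sum_erase_add _ _ (Finset.mem_univ (Sum.inl r))]
      have hz0 : w (Sum.inl r) = 0 := by simp [hwdef]
      rw [hz0, mul_zero, add_zero]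
      rw [Finset.sum_subtype (p := fun c => c ≠ Sum.inl r) (Finset.univ.erase (Sum.inl r))
        (fun x => by simp) (fun c => (T.Mx A l α) i c * w c)]
      rw [← hvi]
      apply Finset.sum_congr rfl
      intro c _
      rw [hMdef, Matrix.submatrix_apply, id_eq, hvw c]
    set xx : Fin n → ℝ := fun i => w (Sum.inl i) with hxx
    set yy : Fin m → ℝ := fun j => w (Sum.inr (Sum.inl j)) with hyy
    set zz : Fin m → ℝ := fun j => w (Sum.inr (Sum.inr j)) with hzz
    have hwsum : w = Sum.elim xx (Sum.elim yy zz) := by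
      funext c
      rcases c with a | (j | j) <;> rfl
    rw [hwsum] at hMw
    have htop : ∀ i : Fin n, (T.K0 A).mulVec yy i + (T.KL A).mulVec zz i = 0 := by
      intro i
      have h := congrFun hMw (Sum.inl i)
      simp only [TreeNetwork.Mx, Matrix.fromBlocks_mulVec,
        Matrix.fromCols_mulVec_sumElim, Matrix.zero_mulVec, zero_add,
        Sum.elim_comp_inl, Sum.elim_comp_inr,
        Sum.elim_inl, Pi.add_apply, Pi.zero_apply] at h
      exact h
    have hmid : ∀ e : Fin m, (T.Gamma1 l α).mulVec xx e = 0 := by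
      intro e
      have h := congrFun hMw (Sum.inr (Sum.inl e))
      simp only [TreeNetwork.Mx, Matrix.fromBlocks_mulVec, Matrix.fromRows_mulVec,
        Matrix.fromCols_mulVec_sumElim, Matrix.zero_mulVec, zero_add, add_zero,
        Sum.elim_comp_inl, Sum.elim_comp_inr,
        Sum.elim_inl, Sum.elim_inr, Pi.add_apply, Pi.zero_apply] at h
      exact h
    have hbot : ∀ e : Fin m, l e / 2 * yy e + l e / 2 * zz e = 0 := by
      intro e
      have h := congrFun hMw (Sum.inr (Sum.inr e))
      simp only [TreeNetwork.Mx, TreeNetwork.Gamma2, Matrix.fromBlocks_mulVec,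
        Matrix.fromRows_mulVec, Matrix.zero_mulVec, zero_add, add_zero,
        Sum.elim_comp_inl, Sum.elim_comp_inr,
        Sum.elim_inl, Sum.elim_inr, Pi.add_apply, Pi.zero_apply,
        Matrix.mulVec_diagonal] at h
      simpa using h
    have hyz : ∀ e, zz e = - yy e := by
      intro e
      have hne : l e / 2 ≠ 0 := ne_of_gt (by linarith [hl e])
      have h2 : l e / 2 * (yy e + zz e) = 0 := by rw [mul_add]; exact hbot e
      have h3 := (mul_eq_zero.mp h2).resolve_left hne
      linarith
    have hyA : ∀ i, (∑ j, if T.tail j = i then A j * yy j else 0)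
        + (∑ j, if T.head j = i then A j * yy j else 0) = 0 := by
      intro i
      have h := htop i
      have e1 : ∀ j, T.K0 A i j * yy j = (if T.tail j = i then A j * yy j else 0) := by
        intro j
        simp only [TreeNetwork.K0, Matrix.of_apply, ite_mul, zero_mul]
      have e2 : ∀ j, T.KL A i j * zz j = (if T.head j = i then A j * yy j else 0) := by
        intro j
        simp only [TreeNetwork.KL, Matrix.of_apply, ite_mul, zero_mul, hyz j]
        split_ifs <;> ring
      rw [Matrix.mulVec, Matrix.mulVec, dotProduct, dotProduct,
        Finset.sum_congr rfl (fun j _ => e1 j), Finset.sum_congr rfl (fun j _ => e2 j)] at h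
      exact h
    have hyy0 : yy = 0 := T.factA hnm A hA yy hyA
    have hzz0 : zz = 0 := by
      funext e
      rw [hyz e, congrFun hyy0 e]
      simp
    have hxB : ∀ e, α (T.tail e) * xx (T.tail e) + xx (T.head e) = 0 := by
      intro e
      have h := hmid e
      rw [Matrix.mulVec, dotProduct] at h
      have e3 : ∀ i, T.Gamma1 l α e i * xx i
          = l e / 2 * ((if i = T.tail e then α i * xx i else 0)
            + (if i = T.head e then xx i else 0)) := by
        intro i
        rw [T.gamma1_entry]
        split_ifs <;> ring
      rw [Finset.sum_congr rfl (fun i _ => e3 i), ← Finset.mul_sum,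
        Finset.sum_add_distrib, Finset.sum_ite_eq', Finset.sum_ite_eq'] at h
      simp only [Finset.mem_univ, if_true] at h
      have hne : l e / 2 ≠ 0 := ne_of_gt (by linarith [hl e])
      exact (mul_eq_zero.mp h).resolve_left hne
    have hxr : xx r = 0 := by simp [hxx, hwdef]
    have hxx0 : xx = 0 := T.factB α hα xx r hxB hxr
    funext c
    rcases c with ⟨c, hc⟩
    rcases c with a | (j | j)
    · exact (hvw ⟨Sum.inl a, hc⟩).trans (congrFun hxx0 a)
    · exact (hvw ⟨Sum.inr (Sum.inl j), hc⟩).trans (congrFun hyy0 j)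
    · exact (hvw ⟨Sum.inr (Sum.inr j), hc⟩).trans (congrFun hzz0 j)
  have hrank : M.rank = Fintype.card {c : Fin n ⊕ (Fin m ⊕ Fin m) // c ≠ Sum.inl r} := by
    have h3 : M.rank = Module.finrank ℝ (LinearMap.range M.mulVecLin) := rfl
    rw [h3, LinearMap.finrank_range_of_inj hinj, Module.finrank_pi]
  rw [hrank]
  have hcard : Fintype.card {c : Fin n ⊕ (Fin m ⊕ Fin m) // c ≠ Sum.inl r}
      = (n + (m + m)) - 1 := by
    rw [Fintype.card_subtype_compl, Fintype.card_subtype_eq]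
    simp [Fintype.card_sum]
  rw [hcard]
  omega
end

section
/- Let n ≥ 2 and m = n − 1, and consider a connected tree graph on n nodes with m directed edges, signed incidence matrix E ∈ ℝ^{m×n}, positive segment lengths l_e > 0 and positive compressor ratios α_i > 0, and let Γ₁ = diag(l/2)·(K̄₀ᵀ diag(α) − K̄_lᵀ) ∈ ℝ^{m×n}. For any node r, the m×m matrix Γ₁′ obtained by deleting the column of Γ₁ corresponding to node r is nonsingular. -/
open Matrix

lemma gamma1_apply {n m : ℕ} (T : TreeNetwork n m) (l : Fin m → ℝ) (α : Fin n → ℝ)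
    (e : Fin m) (v : Fin n) :
    T.Gamma1 l α e v =
      if v = T.tail e then l e / 2 * α v else if v = T.head e then l e / 2 else 0 := by
  have hth := T.tail_ne_head e
  simp only [TreeNetwork.Gamma1, TreeNetwork.Kbar0, TreeNetwork.Kbarl, TreeNetwork.Emat,
    TreeNetwork.EmatAbs, Matrix.diagonal_mul, Matrix.sub_apply, Matrix.mul_diagonal,
    Matrix.transpose_apply, Matrix.smul_apply, Matrix.add_apply, Matrix.of_apply,
    smul_eq_mul]
  by_cases h1 : v = T.tail e
  · subst h1
    simp only [if_pos rfl]
    norm_num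
  · by_cases h2 : v = T.head e
    · subst h2
      simp only [if_neg h1, if_pos rfl]
      norm_num
    · simp only [if_neg h1, if_neg h2]
      norm_num

/-- For any node `r`, the `m × m` matrix `Γ₁′` obtained from `Γ₁` by
deleting the column of node `r` is nonsingular: under any bijection between the edges
and the remaining nodes, its determinant is nonzero. -/
theorem gamma1_delete_column_nonsingular
    (n m : ℕ) (hn : 2 ≤ n) (hm : m = n - 1)
    (T : TreeNetwork n m) (l : Fin m → ℝ) (α : Fin n → ℝ)
    (hl : ∀ e, 0 < l e) (hα : ∀ i, 0 < α i)
    (r : Fin n) (σ : Fin m ≃ {v : Fin n // v ≠ r}) :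
    ((T.Gamma1 l α).submatrix id (fun j => ((σ j : {v : Fin n // v ≠ r}) : Fin n))).det ≠ 0 := by
  classical
  intro hdet
  obtain ⟨v, hv0, hv⟩ := (Matrix.exists_mulVec_eq_zero_iff).2 hdet
  set x : Fin n → ℝ := fun u => if h : u ≠ r then v (σ.symm ⟨u, h⟩) else 0 with hxdef
  have hxr : x r = 0 := by simp [hxdef]
  have hxσ : ∀ j, x (σ j) = v j := by
    intro j
    have h : (σ j : {v : Fin n // v ≠ r}).1 ≠ r := (σ j).2
    simp only [hxdef, dif_pos h]
    congr 1
    rw [show (⟨(σ j : {v : Fin n // v ≠ r}).1, h⟩ : {v : Fin n // v ≠ r}) = σ j from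
      Subtype.ext rfl]
    exact σ.symm_apply_apply j
  have hedge : ∀ e : Fin m,
      l e / 2 * α (T.tail e) * x (T.tail e) + l e / 2 * x (T.head e) = 0 := by
    intro e
    have hth := T.tail_ne_head e
    have h0 : ((T.Gamma1 l α).submatrix id
        (fun j => ((σ j : {v : Fin n // v ≠ r}) : Fin n)) *ᵥ v) e = 0 := by
      rw [hv]; rfl
    have hsum : ∀ u : Fin n, T.Gamma1 l α e u * x u =
        (if u = T.tail e then l e / 2 * α (T.tail e) * x (T.tail e) else 0) +
        (if u = T.head e then l e / 2 * x (T.head e) else 0) := by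
      intro u
      rw [gamma1_apply]
      by_cases h1 : u = T.tail e
      · subst h1
        simp [hth]
      · by_cases h2 : u = T.head e
        · subst h2
          simp [h1]
        · simp [h1, h2]
    have key : ∑ u : Fin n, T.Gamma1 l α e u * x u = 0 := by
      have h1 : ∑ u : Fin n, T.Gamma1 l α e u * x u
          = ∑ u ∈ Finset.univ.erase r, T.Gamma1 l α e u * x u := by
        rw [Finset.sum_erase _ (by rw [hxr, mul_zero])]
      have h2 : ∑ u ∈ Finset.univ.erase r, T.Gamma1 l α e u * x u
          = ∑ u : {w : Fin n // w ≠ r}, T.Gamma1 l α e (u : Fin n) * x u := by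
        apply Finset.sum_subtype
        intro u; simp
      have h3 : ∑ u : {w : Fin n // w ≠ r}, T.Gamma1 l α e (u : Fin n) * x u
          = ∑ j : Fin m, T.Gamma1 l α e (σ j : Fin n) * x (σ j) := by
        rw [← Equiv.sum_comp σ (fun u : {w : Fin n // w ≠ r} =>
          T.Gamma1 l α e (u : Fin n) * x u)]
      rw [h1, h2, h3, ← h0]
      rw [Matrix.mulVec, dotProduct]
      apply Finset.sum_congr rfl
      intro j _
      rw [hxσ]
      rfl
    rw [Finset.sum_congr rfl (fun u _ => hsum u)] at key
    rw [Finset.sum_add_distrib, Finset.sum_ite_eq' Finset.univ,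
      Finset.sum_ite_eq' Finset.univ] at key
    simpa using key
  have hprop : ∀ u w : Fin n,
      (SimpleGraph.fromEdgeSet (Set.range fun e => s(T.tail e, T.head e))).Adj u w →
      x u = 0 → x w = 0 := by
    intro u w hadj hu
    rw [SimpleGraph.fromEdgeSet_adj] at hadj
    obtain ⟨⟨e, he⟩, hne⟩ := hadj
    have hle : 0 < l e / 2 := by linarith [hl e]
    have heq := hedge e
    have he' : s(T.tail e, T.head e) = s(u, w) := he
    rcases Sym2.eq_iff.mp he' with ⟨h1, h2⟩ | ⟨h1, h2⟩
    · rw [h1, h2, hu, mul_zero, zero_add] at heq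
      exact (mul_eq_zero.mp heq).resolve_left (ne_of_gt hle)
    · rw [h2, h1, hu, mul_zero, add_zero] at heq
      exact (mul_eq_zero.mp heq).resolve_left (ne_of_gt (mul_pos hle (hα w)))
  have hwalk : ∀ {a b : Fin n}
      (p : (SimpleGraph.fromEdgeSet (Set.range fun e => s(T.tail e, T.head e))).Walk a b),
      x a = 0 → x b = 0 := by
    intro a b p
    induction p with
    | nil => exact id
    | cons h q ih => exact fun ha => ih (hprop _ _ h ha)
  have hall : ∀ u : Fin n, x u = 0 := by
    intro u
    obtain ⟨p⟩ := T.isTree.isConnected.preconnected r u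
    exact hwalk p hxr
  exact hv0 (funext fun j => by rw [← hxσ j, hall, Pi.zero_apply])
end

section
/- Let n ≥ 2 and m = n − 1, and consider a connected tree graph on n nodes with m directed edges and the matrices K₀, K_L ∈ ℝ^{n×m}, Γ₁ ∈ ℝ^{m×n}, Γ₂ ∈ ℝ^{m×m} defined as in the context. Fix a node r (for the deleted density column of Γ₁) and a node r′ (for the deleted flux-conservation row of K₀ and K_L), and let Γ₁′ ∈ ℝ^{m×m} be Γ₁ with column r deleted and K₀′, K_L′ ∈ ℝ^{(n−1)×m} be K₀, K_L with row r′ deleted. Then the square (n−1+2m)×(n−1+2m) block matrix M_x″ = [[0, K₀′, K_L′], [Γ₁′, 0, 0], [0, Γ₂, Γ₂]] is nonsingular. -/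
open Matrix

section AuxZero

variable {n : ℕ}

/-- Extend a function on `{v // v ≠ r0}` by zero at `r0`. -/
noncomputable def extZero (r0 : Fin n) (z : {v : Fin n // v ≠ r0} → ℝ) : Fin n → ℝ :=
  fun v => if h : v = r0 then 0 else z ⟨v, h⟩

lemma sum_ite_subtype (r0 t : Fin n) (a : Fin n → ℝ) (z : {v : Fin n // v ≠ r0} → ℝ) :
    ∑ v : {v : Fin n // v ≠ r0}, (if t = (v : Fin n) then a (v : Fin n) else 0) * z v
      = a t * extZero r0 z t := by
  unfold extZero
  by_cases h : t = r0
  · subst h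
    rw [dif_pos rfl, mul_zero]
    apply Finset.sum_eq_zero
    intro v _
    rw [if_neg (fun hh => v.2 hh.symm), zero_mul]
  · rw [dif_neg h, Fintype.sum_eq_single (⟨t, h⟩ : {v : Fin n // v ≠ r0})]
    · rw [if_pos rfl]
    · intro b hb
      rw [if_neg, zero_mul]
      intro hh
      exact hb (Subtype.ext hh.symm)

end AuxZero

namespace TreeNetwork

/-- The matrix `M_x″` of Theorem 3: the mass matrix with the density column of node
`r` deleted (from `Γ₁`) and the flux-conservation row of node `r'` deleted (from
`K₀` and `K_L`). -/
noncomputable def Mxpp {n m : ℕ} (T : TreeNetwork n m) (A l : Fin m → ℝ)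
    (α : Fin n → ℝ) (r r' : Fin n) :
    Matrix ({v : Fin n // v ≠ r'} ⊕ (Fin m ⊕ Fin m))
      ({v : Fin n // v ≠ r} ⊕ (Fin m ⊕ Fin m)) ℝ :=
  Matrix.fromBlocks 0
    (Matrix.fromCols ((T.K0 A).submatrix Subtype.val id)
      ((T.KL A).submatrix Subtype.val id))
    (Matrix.fromRows ((T.Gamma1 l α).submatrix id Subtype.val) 0)
    (Matrix.fromBlocks 0 0 (Gamma2 l) (Gamma2 l))

variable {n m : ℕ}

lemma propagate (T : TreeNetwork n m) (c d : Fin m → ℝ)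
    (hc : ∀ e, c e ≠ 0) (hd : ∀ e, d e ≠ 0) (x : Fin n → ℝ) (r0 : Fin n)
    (hx0 : x r0 = 0) (heq : ∀ e, c e * x (T.tail e) + d e * x (T.head e) = 0)
    (v : Fin n) : x v = 0 := by
  have key : ∀ (a b : Fin n),
      (SimpleGraph.fromEdgeSet (Set.range fun e => s(T.tail e, T.head e))).Walk a b →
      x a = 0 → x b = 0 := by
    intro a b w
    induction w with
    | nil => exact id
    | cons hadj p ih =>
      intro ha
      apply ih
      rw [SimpleGraph.fromEdgeSet_adj] at hadj
      obtain ⟨⟨e, he⟩, hne⟩ := hadj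
      rw [Sym2.eq_iff] at he
      have hee := heq e
      rcases he with ⟨h1, h2⟩ | ⟨h1, h2⟩
      · rw [h1, h2, ha, mul_zero, zero_add] at hee
        exact (mul_eq_zero.1 hee).resolve_left (hd e)
      · rw [h1, h2, ha, mul_zero, add_zero] at hee
        exact (mul_eq_zero.1 hee).resolve_left (hc e)
  obtain ⟨w⟩ := T.isTree.isConnected.preconnected r0 v
  exact key r0 v w hx0

lemma Gamma1_apply (T : TreeNetwork n m) (l : Fin m → ℝ) (α : Fin n → ℝ)
    (e : Fin m) (v : Fin n) :
    T.Gamma1 l α e v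
      = l e / 2 * ((if T.tail e = v then α v else 0) + (if T.head e = v then 1 else 0)) := by
  have hne := T.tail_ne_head e
  simp only [Gamma1, Kbar0, Kbarl, Emat, EmatAbs, Matrix.diagonal_mul, Matrix.mul_diagonal,
    Matrix.sub_apply, Matrix.transpose_apply, Matrix.smul_apply, Matrix.add_apply,
    Matrix.of_apply, smul_eq_mul]
  rcases eq_or_ne (T.tail e) v with h1 | h1
  · subst h1
    simp only [if_pos rfl, if_neg (Ne.symm hne), if_neg hne]
    norm_num
  · rcases eq_or_ne (T.head e) v with h2 | h2
    · subst h2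
      simp only [if_pos rfl, if_neg hne, if_neg (Ne.symm hne)]
      norm_num
    · simp only [if_neg (fun h : v = T.tail e => h1 h.symm), if_neg h1,
        if_neg (fun h : v = T.head e => h2 h.symm), if_neg h2]
      norm_num

end TreeNetwork

/-- The square `(n−1+2m) × (n−1+2m)` matrix `M_x″`, obtained from
the mass matrix by deleting the density column of node `r` and the flux-conservation
row of node `r'`, is nonsingular: under any bijection of its row and column index
sets its determinant is nonzero. -/
theorem Mxpp_nonsingular (n m : ℕ) (hn : 2 ≤ n) (hm : m = n - 1)
    (T : TreeNetwork n m) (A l : Fin m → ℝ) (α : Fin n → ℝ)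
    (hA : ∀ j, 0 < A j) (hl : ∀ e, 0 < l e) (hα : ∀ i, 0 < α i)
    (r r' : Fin n)
    (σ : ({v : Fin n // v ≠ r'} ⊕ (Fin m ⊕ Fin m)) ≃
         ({v : Fin n // v ≠ r} ⊕ (Fin m ⊕ Fin m))) :
    ((T.Mxpp A l α r r').submatrix id σ).det ≠ 0 := by
  intro hdet
  obtain ⟨v0, hv0, hMv⟩ := Matrix.exists_mulVec_eq_zero_iff.2 hdet
  set y : ({v : Fin n // v ≠ r} ⊕ (Fin m ⊕ Fin m)) → ℝ := v0 ∘ σ.symm with hy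
  have hMy : T.Mxpp A l α r r' *ᵥ y = 0 := by
    have h := (Matrix.submatrix_mulVec_equiv (T.Mxpp A l α r r') v0 id σ).symm.trans hMv
    simpa [Function.comp_id] using h
  set ρ' : {v : Fin n // v ≠ r} → ℝ := fun w => y (Sum.inl w) with hρ'def
  set φ0 : Fin m → ℝ := fun j => y (Sum.inr (Sum.inl j)) with hφ0def
  set φl : Fin m → ℝ := fun j => y (Sum.inr (Sum.inr j)) with hφldef
  have hl2 : ∀ e, l e / 2 ≠ 0 := fun e => by have := hl e; positivity
  -- third block row: φl = -φ0
  have h3 : ∀ e, φl e = -φ0 e := by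
    intro e
    have h := congrFun hMy (Sum.inr (Sum.inr e))
    simp only [Matrix.mulVec, dotProduct, TreeNetwork.Mxpp, Fintype.sum_sum_type,
      Matrix.fromBlocks_apply₂₁, Matrix.fromBlocks_apply₂₂, Matrix.fromRows_apply_inr,
      Matrix.zero_apply, zero_mul, Finset.sum_const_zero, zero_add, TreeNetwork.Gamma2,
      Matrix.diagonal_apply, ite_mul, Finset.sum_ite_eq, Finset.mem_univ, if_true,
      Pi.zero_apply] at h
    have h' : l e / 2 * (φ0 e + φl e) = 0 := by rw [mul_add]; linarith
    have := (mul_eq_zero.1 h').resolve_left (hl2 e)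
    linarith
  -- second block row: Gamma1' * ρ' = 0
  have h2 : ∀ e, ∑ w : {v : Fin n // v ≠ r}, T.Gamma1 l α e (w : Fin n) * ρ' w = 0 := by
    intro e
    have h := congrFun hMy (Sum.inr (Sum.inl e))
    simpa only [Matrix.mulVec, dotProduct, TreeNetwork.Mxpp, Fintype.sum_sum_type,
      Matrix.fromBlocks_apply₂₁, Matrix.fromBlocks_apply₂₂, Matrix.fromBlocks_apply₁₁,
      Matrix.fromBlocks_apply₁₂, Matrix.fromRows_apply_inl,
      Matrix.zero_apply, zero_mul, Finset.sum_const_zero, add_zero, zero_add,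
      Matrix.submatrix_apply, id_eq, Pi.zero_apply] using h
  -- first block row
  have h1 : ∀ v : {v : Fin n // v ≠ r'},
      (∑ j, T.K0 A (v : Fin n) j * φ0 j) + (∑ j, T.KL A (v : Fin n) j * φl j) = 0 := by
    intro v
    have h := congrFun hMy (Sum.inl v)
    simpa only [Matrix.mulVec, dotProduct, TreeNetwork.Mxpp, Fintype.sum_sum_type,
      Matrix.fromBlocks_apply₁₁, Matrix.fromBlocks_apply₁₂, Matrix.fromCols_apply_inl,
      Matrix.fromCols_apply_inr, Matrix.zero_apply, zero_mul, Finset.sum_const_zero,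
      zero_add, Matrix.submatrix_apply, id_eq, Pi.zero_apply] using h
  -- densities vanish
  have hρ : ∀ w, ρ' w = 0 := by
    have hx : ∀ v, extZero r ρ' v = 0 := by
      apply T.propagate (fun e => α (T.tail e)) (fun _ => 1)
        (fun e => ne_of_gt (hα _)) (fun _ => one_ne_zero) _ r (dif_pos rfl)
      intro e
      have hsum : ∑ w : {v : Fin n // v ≠ r}, T.Gamma1 l α e (w : Fin n) * ρ' w
          = l e / 2 * (α (T.tail e) * extZero r ρ' (T.tail e)
              + 1 * extZero r ρ' (T.head e)) := by
        calc ∑ w : {v : Fin n // v ≠ r}, T.Gamma1 l α e (w : Fin n) * ρ' w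
            = ∑ w : {v : Fin n // v ≠ r},
                (l e / 2 * ((if T.tail e = (w : Fin n) then α (w : Fin n) else 0) * ρ' w)
                  + l e / 2 * ((if T.head e = (w : Fin n) then (fun _ => (1:ℝ)) (w : Fin n) else 0) * ρ' w)) := by
              refine Finset.sum_congr rfl fun w _ => ?_
              rw [T.Gamma1_apply]
              ring
          _ = l e / 2 * (∑ w : {v : Fin n // v ≠ r},
                (if T.tail e = (w : Fin n) then α (w : Fin n) else 0) * ρ' w)
              + l e / 2 * (∑ w : {v : Fin n // v ≠ r},
                (if T.head e = (w : Fin n) then (fun _ => (1:ℝ)) (w : Fin n) else 0) * ρ' w) := by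
              rw [Finset.sum_add_distrib, ← Finset.mul_sum, ← Finset.mul_sum]
          _ = l e / 2 * (α (T.tail e) * extZero r ρ' (T.tail e)
                + 1 * extZero r ρ' (T.head e)) := by
              rw [sum_ite_subtype r (T.tail e) α ρ',
                sum_ite_subtype r (T.head e) (fun _ => (1:ℝ)) ρ']
              ring
      have h := h2 e
      rw [hsum] at h
      exact (mul_eq_zero.1 h).resolve_left (hl2 e)
    intro w
    have := hx (w : Fin n)
    rw [extZero, dif_neg w.2] at this
    simpa using this
  -- fluxes vanish
  set P : Matrix (Fin m) {v : Fin n // v ≠ r'} ℝ :=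
    Matrix.of fun j w => (if T.tail j = (w : Fin n) then A j else 0)
      + (if T.head j = (w : Fin n) then A j else 0) with hPdef
  have hker : ∀ z, P *ᵥ z = 0 → z = 0 := by
    intro z hz
    have hx : ∀ v, extZero r' z v = 0 := by
      apply T.propagate A A (fun e => ne_of_gt (hA _)) (fun e => ne_of_gt (hA _)) _ r'
        (dif_pos rfl)
      intro e
      have h := congrFun hz e
      simp only [Matrix.mulVec, dotProduct, hPdef, Matrix.of_apply, Pi.zero_apply] at h
      calc A e * extZero r' z (T.tail e) + A e * extZero r' z (T.head e)
          = (∑ w : {v : Fin n // v ≠ r'},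
              (if T.tail e = (w : Fin n) then (fun _ => A e) (w : Fin n) else 0) * z w)
            + (∑ w : {v : Fin n // v ≠ r'},
              (if T.head e = (w : Fin n) then (fun _ => A e) (w : Fin n) else 0) * z w) := by
            rw [sum_ite_subtype r' (T.tail e) (fun _ => A e) z,
              sum_ite_subtype r' (T.head e) (fun _ => A e) z]
        _ = ∑ w : {v : Fin n // v ≠ r'},
              ((if T.tail e = (w : Fin n) then A e else 0)
                + (if T.head e = (w : Fin n) then A e else 0)) * z w := by
            rw [← Finset.sum_add_distrib]
            exact Finset.sum_congr rfl fun w _ => by ring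
        _ = 0 := h
    funext w
    have := hx (w : Fin n)
    rw [extZero, dif_neg w.2] at this
    simpa using this
  have hcard : Fintype.card {v : Fin n // v ≠ r'} = m := by
    have h1 : Fintype.card {v : Fin n // v ≠ r'}
        = Fintype.card (Fin n) - Fintype.card {v : Fin n // v = r'} :=
      Fintype.card_subtype_compl _
    rw [h1, Fintype.card_subtype_eq, Fintype.card_fin, hm]
  let ε : {v : Fin n // v ≠ r'} ≃ Fin m := Fintype.equivOfCardEq (by simp [hcard])
  have hdetQ : (P.submatrix id ε.symm).det ≠ 0 := by
    intro h0
    obtain ⟨z, hz0, hQz⟩ := Matrix.exists_mulVec_eq_zero_iff.2 h0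
    have hPz : P *ᵥ (z ∘ ε) = 0 := by
      have h := (Matrix.submatrix_mulVec_equiv P z id ε.symm).symm.trans hQz
      simpa [Function.comp_id] using h
    have hz := hker _ hPz
    apply hz0
    funext k
    have := congrFun hz (ε.symm k)
    simpa using this
  have hPsum : ∀ v : {v : Fin n // v ≠ r'}, ∑ j, φ0 j * P j v = 0 := by
    intro v
    have h := h1 v
    calc ∑ j, φ0 j * P j v
        = ∑ j, (T.K0 A (v : Fin n) j * φ0 j + T.KL A (v : Fin n) j * φl j) := by
          refine Finset.sum_congr rfl fun j _ => ?_
          rw [h3 j]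
          simp only [hPdef, TreeNetwork.K0, TreeNetwork.KL, Matrix.of_apply]
          rcases eq_or_ne (T.tail j) (v : Fin n) with ht | ht <;>
            rcases eq_or_ne (T.head j) (v : Fin n) with hh | hh <;>
            simp [ht, hh] <;> ring
      _ = 0 := by rw [Finset.sum_add_distrib]; exact h
  have hφ0 : φ0 = 0 := by
    by_contra hne0
    apply hdetQ
    apply Matrix.exists_vecMul_eq_zero_iff.1
    refine ⟨φ0, hne0, ?_⟩
    funext w
    have := hPsum (ε.symm w)
    simpa [Matrix.vecMul, dotProduct, Matrix.submatrix_apply] using this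
  -- conclude
  apply hv0
  funext k
  have hk : v0 k = y (σ k) := by simp [hy]
  rw [hk]
  rcases hσ : σ k with w | jj
  · exact hρ w
  · rcases jj with j | j
    · show φ0 j = 0
      rw [hφ0]
      rfl
    · show φl j = 0
      rw [h3 j, hφ0]
      simp
end

section
/- Let n ≥ 3 and m = n − 1, and consider a connected tree graph on n nodes with m directed edges and the matrices K₀, K_L ∈ ℝ^{n×m} defined from positive areas A_j > 0 as in the context. Let i be an edge with endpoints j and k. Then the (n−2)×(m−1) matrix obtained from K₀ − K_L by deleting column i and deleting rows j and k is square (since n − 2 = m − 1) and nonsingular. -/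
open Matrix

/-- Let `i` be an edge with endpoints `j = tail i` and `k = head i`.
The `(n−2) × (m−1)` matrix obtained from `K₀ − K_L` by deleting column `i` and rows
`j` and `k` is square (since `n − 2 = m − 1`) and nonsingular: under any bijection
between the remaining nodes and the remaining edges, its determinant is nonzero. -/
theorem unsigned_incidence_delete_edge_and_endpoints_nonsingular
    (n m : ℕ) (hn : 3 ≤ n) (hm : m = n - 1)
    (T : TreeNetwork n m) (A : Fin m → ℝ) (hA : ∀ j, 0 < A j)
    (i : Fin m)
    (σ : {v : Fin n // v ≠ T.tail i ∧ v ≠ T.head i} ≃ {e : Fin m // e ≠ i}) :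
    ((T.K0 A - T.KL A).submatrix
      (Subtype.val : {v : Fin n // v ≠ T.tail i ∧ v ≠ T.head i} → Fin n)
      (fun v => ((σ v : {e : Fin m // e ≠ i}) : Fin m))).det ≠ 0 := by
  classical
  intro hdet
  rw [← Matrix.exists_vecMul_eq_zero_iff] at hdet
  obtain ⟨c, hc0, hc⟩ := hdet
  -- extend c by zero to all nodes
  have hct : ∃ ct : Fin n → ℝ,
      (∀ v : {v : Fin n // v ≠ T.tail i ∧ v ≠ T.head i}, c v = ct v.val) ∧
      ct (T.tail i) = 0 ∧ ct (T.head i) = 0 := by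
    refine ⟨fun v => if h : v ≠ T.tail i ∧ v ≠ T.head i then c ⟨v, h⟩ else 0,
      fun v => by simp only [dif_pos v.2], by simp, by simp⟩
  obtain ⟨ct, hcv, hcj, hck⟩ := hct
  -- entry formula
  have hM : ∀ v e, (T.K0 A - T.KL A) v e
      = (if T.tail e = v then A e else 0) + (if T.head e = v then A e else 0) := by
    intro v e
    simp only [Matrix.sub_apply, TreeNetwork.K0, TreeNetwork.KL, Matrix.of_apply]
    split <;> split <;> ring
  -- the key linear relations
  have hce : ∀ e : Fin m, e ≠ i → ct (T.tail e) + ct (T.head e) = 0 := by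
    intro e he
    have h0 := congrFun hc (σ.symm ⟨e, he⟩)
    simp only [Matrix.vecMul, dotProduct, Matrix.submatrix_apply,
      Equiv.apply_symm_apply, Pi.zero_apply] at h0
    have hsum : (∑ v : {v : Fin n // v ≠ T.tail i ∧ v ≠ T.head i},
        c v * (T.K0 A - T.KL A) v.val e) = A e * (ct (T.tail e) + ct (T.head e)) := by
      have h2 : (∑ v : {v : Fin n // v ≠ T.tail i ∧ v ≠ T.head i},
            c v * (T.K0 A - T.KL A) v.val e)
          = ∑ v : Fin n, ct v * (T.K0 A - T.KL A) v e := by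
        rw [← Finset.sum_filter_add_sum_filter_not Finset.univ
          (fun v : Fin n => v ≠ T.tail i ∧ v ≠ T.head i)
          (fun v => ct v * (T.K0 A - T.KL A) v e)]
        rw [Finset.sum_subtype (p := fun v : Fin n => v ≠ T.tail i ∧ v ≠ T.head i)
          (Finset.univ.filter (fun v : Fin n => v ≠ T.tail i ∧ v ≠ T.head i))
          (fun x => by simp) (fun v => ct v * (T.K0 A - T.KL A) v e)]
        have hz : (∑ v ∈ Finset.univ.filter
            (fun v : Fin n => ¬(v ≠ T.tail i ∧ v ≠ T.head i)),
            ct v * (T.K0 A - T.KL A) v e) = 0 := by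
          apply Finset.sum_eq_zero
          intro v hv
          simp only [Finset.mem_filter, not_and_or, not_not] at hv
          have hv0 : ct v = 0 := by
            rcases hv.2 with h | h
            · rw [h]; exact hcj
            · rw [h]; exact hck
          rw [hv0, zero_mul]
        rw [hz, add_zero]
        apply Finset.sum_congr rfl
        intro v _
        rw [hcv]
      rw [h2]
      simp only [hM, mul_add, Finset.sum_add_distrib, mul_ite, mul_zero]
      rw [Finset.sum_ite_eq Finset.univ (T.tail e) (fun v => ct v * A e),
        Finset.sum_ite_eq Finset.univ (T.head e) (fun v => ct v * A e)]
      simp only [Finset.mem_univ, if_true]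
      ring
    rw [hsum] at h0
    rcases mul_eq_zero.mp h0 with h | h
    · exact absurd h (hA e).ne'
    · exact h
  -- propagate zero along walks to tail i
  have hwalk : ∀ (w v : Fin n), ct w = 0 →
      (SimpleGraph.fromEdgeSet
        (Set.range fun e => s(T.tail e, T.head e))).Walk v w → ct v = 0 := by
    intro w v hw p
    induction p with
    | nil => exact hw
    | @cons a b _ hab q ih =>
      rw [SimpleGraph.fromEdgeSet_adj] at hab
      obtain ⟨⟨e, he⟩, hne⟩ := hab
      rw [Sym2.eq_iff] at he
      by_cases hei : e = i
      · subst hei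
        rcases he with ⟨h1, _⟩ | ⟨_, h2⟩
        · rw [← h1]; exact hcj
        · rw [← h2]; exact hck
      · have h3 := hce e hei
        rcases he with ⟨h1, h2⟩ | ⟨h1, h2⟩
        · rw [h1, h2] at h3; rw [ih hw] at h3; linarith
        · rw [h1, h2] at h3; rw [ih hw] at h3; linarith
  have hall : ∀ v : Fin n, ct v = 0 := by
    intro v
    obtain ⟨p⟩ := T.isTree.isConnected.preconnected v (T.tail i)
    exact hwalk (T.tail i) v hcj p
  apply hc0
  funext v
  rw [Pi.zero_apply, hcv v]
  exact hall v.val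
end

section
/- Let n ≥ 2 and m = n − 1, and consider a connected tree graph on n nodes with m directed edges and the matrices K₀, K_L ∈ ℝ^{n×m} and Γ₂ = diag(l/2) ∈ ℝ^{m×m} (with all l_e > 0) defined as in the context. Let i be any edge and let Γ₂′ ∈ ℝ^{(m−1)×m} be Γ₂ with row i deleted. Then the (n + m − 1)×(2m) block matrix [[K₀, K_L], [Γ₂′, Γ₂′]] is square (since n + m − 1 = 2m) and nonsingular. -/
open Matrix

/-- For any edge `i`, letting `Γ₂′` be `Γ₂` with row `i` deleted,
the `(n + m − 1) × 2m` block matrix `[[K₀, K_L], [Γ₂′, Γ₂′]]` is square (since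
`n + m − 1 = 2m`) and nonsingular: under any bijection of its row and column index
sets its determinant is nonzero. -/
theorem fluxBlock_delete_momentum_row_nonsingular
    (n m : ℕ) (hn : 2 ≤ n) (hm : m = n - 1)
    (T : TreeNetwork n m) (A l : Fin m → ℝ)
    (hA : ∀ j, 0 < A j) (hl : ∀ e, 0 < l e)
    (i : Fin m)
    (σ : (Fin n ⊕ {e : Fin m // e ≠ i}) ≃ (Fin m ⊕ Fin m)) :
    ((Matrix.fromBlocks (T.K0 A) (T.KL A)
        ((TreeNetwork.Gamma2 l).submatrix
          (Subtype.val : {e : Fin m // e ≠ i} → Fin m) id)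
        ((TreeNetwork.Gamma2 l).submatrix
          (Subtype.val : {e : Fin m // e ≠ i} → Fin m) id)).submatrix id σ).det ≠ 0 := by
  classical
  set G2 : Matrix {e : Fin m // e ≠ i} (Fin m) ℝ :=
    (TreeNetwork.Gamma2 l).submatrix (Subtype.val : {e : Fin m // e ≠ i} → Fin m) id with hG2
  set M : Matrix (Fin n ⊕ {e : Fin m // e ≠ i}) (Fin m ⊕ Fin m) ℝ :=
    Matrix.fromBlocks (T.K0 A) (T.KL A) G2 G2 with hMdef
  -- the span of the columns of `M`
  set Sp : Submodule ℝ ((Fin n ⊕ {e : Fin m // e ≠ i}) → ℝ) :=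
    Submodule.span ℝ (Set.range Mᵀ) with hSp
  set δ : (Fin n ⊕ {e : Fin m // e ≠ i}) → ((Fin n ⊕ {e : Fin m // e ≠ i}) → ℝ) :=
    fun r r' => if r' = r then 1 else 0 with hδ
  have hcol : ∀ c, Mᵀ c ∈ Sp := fun c => Submodule.subset_span ⟨c, rfl⟩
  have hAne : ∀ j, A j ≠ 0 := fun j => (hA j).ne'
  have hlne : ∀ e, l e / 2 ≠ 0 := fun e => (div_pos (hl e) two_pos).ne'
  -- column `inl i` is `A i • δ (inl (tail i))`
  have hcoli : Mᵀ (Sum.inl i) = A i • δ (Sum.inl (T.tail i)) := by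
    funext r
    rcases r with v | ⟨e, he⟩
    · simp [hMdef, hδ, TreeNetwork.K0, eq_comm]
    · simp [hMdef, hδ, hG2, TreeNetwork.Gamma2, Matrix.diagonal_apply, he]
  have hcoli' : Mᵀ (Sum.inr i) = (-A i) • δ (Sum.inl (T.head i)) := by
    funext r
    rcases r with v | ⟨e, he⟩
    · simp [hMdef, hδ, TreeNetwork.KL, eq_comm]
    · simp [hMdef, hδ, hG2, TreeNetwork.Gamma2, Matrix.diagonal_apply, he]
  have htaili : δ (Sum.inl (T.tail i)) ∈ Sp := by
    have := Sp.smul_mem (A i)⁻¹ (hcol (Sum.inl i))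
    rwa [hcoli, smul_smul, inv_mul_cancel₀ (hAne i), one_smul] at this
  have hheadi : δ (Sum.inl (T.head i)) ∈ Sp := by
    have := Sp.smul_mem (-(A i)⁻¹) (hcol (Sum.inr i))
    rwa [hcoli', smul_smul, neg_mul_neg, inv_mul_cancel₀ (hAne i), one_smul] at this
  -- for `j ≠ i`, the sum of the two endpoint basis vectors is in the span
  have hpair : ∀ j : Fin m, j ≠ i →
      δ (Sum.inl (T.tail j)) + δ (Sum.inl (T.head j)) ∈ Sp := by
    intro j hj
    have hdiff : Mᵀ (Sum.inl j) - Mᵀ (Sum.inr j)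
        = A j • (δ (Sum.inl (T.tail j)) + δ (Sum.inl (T.head j))) := by
      funext r
      rcases r with v | ⟨e, he⟩
      · have hth := T.tail_ne_head j
        by_cases h1 : T.tail j = v
        · subst h1
          have h2 : T.head j ≠ T.tail j := fun h => hth h.symm
          simp [hMdef, hδ, TreeNetwork.K0, TreeNetwork.KL, h2, Ne.symm h2]
        · by_cases h2 : T.head j = v
          · subst h2
            simp [hMdef, hδ, TreeNetwork.K0, TreeNetwork.KL, hth, h1, Ne.symm h1]
          · simp [hMdef, hδ, TreeNetwork.K0, TreeNetwork.KL, h1, h2,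
              Ne.symm h1, Ne.symm h2]
      · simp [hMdef, hδ, hG2]
    have := Sp.smul_mem (A j)⁻¹ (sub_mem (hcol (Sum.inl j)) (hcol (Sum.inr j)))
    rwa [hdiff, smul_smul, inv_mul_cancel₀ (hAne j), one_smul] at this
  -- connectivity: every node basis vector is in the span
  have hnode : ∀ v : Fin n, δ (Sum.inl v) ∈ Sp := by
    set Gg := SimpleGraph.fromEdgeSet (Set.range fun e => s(T.tail e, T.head e)) with hGg
    have hadj : ∀ a b : Fin n, Gg.Adj a b →
        δ (Sum.inl a) ∈ Sp → δ (Sum.inl b) ∈ Sp := by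
      intro a b hab hva
      rw [hGg, SimpleGraph.fromEdgeSet_adj] at hab
      obtain ⟨⟨j, hj⟩, -⟩ := hab
      rw [Sym2.eq_iff] at hj
      by_cases hji : j = i
      · subst hji
        rcases hj with ⟨h1, h2⟩ | ⟨h1, h2⟩
        · rw [← h2]; exact hheadi
        · rw [← h1]; exact htaili
      · rcases hj with ⟨h1, h2⟩ | ⟨h1, h2⟩
        · subst h1; subst h2
          simpa using sub_mem (hpair j hji) hva
        · subst h1; subst h2
          simpa using sub_mem (hpair j hji) hva
    have key : ∀ (v w : Fin n), Gg.Walk v w →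
        δ (Sum.inl v) ∈ Sp → δ (Sum.inl w) ∈ Sp := by
      intro v w p
      induction p with
      | nil => exact id
      | cons h _ ih => exact fun hv => ih (hadj _ _ h hv)
    intro v
    obtain ⟨w⟩ := T.isTree.isConnected.preconnected (T.tail i) v
    exact key _ _ w htaili
  -- the edge basis vectors are in the span
  have hedge : ∀ e : {e : Fin m // e ≠ i}, δ (Sum.inr e) ∈ Sp := by
    intro e
    have hcole : Mᵀ (Sum.inl e.val)
        = A e.val • δ (Sum.inl (T.tail e.val)) + (l e.val / 2) • δ (Sum.inr e) := by
      funext r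
      rcases r with v | ⟨e', he'⟩
      · simp [hMdef, hδ, TreeNetwork.K0, eq_comm]
      · by_cases h : e' = e.val
        · have : (⟨e', he'⟩ : {e : Fin m // e ≠ i}) = e := Subtype.ext h
          simp [hMdef, hδ, hG2, TreeNetwork.Gamma2, Matrix.diagonal_apply, h, this]
        · have : (⟨e', he'⟩ : {e : Fin m // e ≠ i}) ≠ e := fun hc => h (congrArg Subtype.val hc)
          simp [hMdef, hδ, hG2, TreeNetwork.Gamma2, Matrix.diagonal_apply, h, this]
    have hmem : (l e.val / 2) • δ (Sum.inr e) ∈ Sp := by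
      have := sub_mem (hcol (Sum.inl e.val)) (Sp.smul_mem (A e.val) (hnode (T.tail e.val)))
      rwa [hcole, add_sub_cancel_left] at this
    have := Sp.smul_mem (l e.val / 2)⁻¹ hmem
    rwa [smul_smul, inv_mul_cancel₀ (hlne e.val), one_smul] at this
  -- hence the span is everything
  have hall : ∀ x : (Fin n ⊕ {e : Fin m // e ≠ i}) → ℝ, x ∈ Sp := by
    intro x
    have hx : x = ∑ r, x r • δ r := by
      funext r'
      simp [hδ, Finset.sum_apply, Finset.sum_ite_eq]
    rw [hx]
    refine Submodule.sum_mem _ fun r _ => Sp.smul_mem _ ?_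
    rcases r with v | e
    · exact hnode v
    · exact hedge e
  -- surjectivity of `mulVec`, hence `IsUnit`, hence nonzero determinant
  have hsurj : Function.Surjective (M.submatrix id σ).mulVec := by
    intro t
    have ht : t ∈ LinearMap.range M.mulVecLin := by
      rw [Matrix.range_mulVecLin]
      exact hall t
    obtain ⟨y, hy⟩ := ht
    refine ⟨y ∘ σ, ?_⟩
    rw [Matrix.submatrix_mulVec_equiv]
    have : (y ∘ ⇑σ) ∘ ⇑σ.symm = y := by
      funext c; simp
    rw [this]
    exact hy
  have hunit : IsUnit (M.submatrix id σ) := Matrix.mulVec_surjective_iff_isUnit.mp hsurj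
  exact ((Matrix.isUnit_iff_isUnit_det _).mp hunit).ne_zero
end

section
/- Let n ≥ 2 and m = n − 1, and consider a connected tree graph on n nodes with m directed edges and the matrices K₀, K_L ∈ ℝ^{n×m} and Γ₂ = diag(l/2) ∈ ℝ^{m×m} (with all l_e > 0) defined as in the context. Fix an edge i and let Γ₂′ ∈ ℝ^{(m−1)×m} be Γ₂ with row i deleted. Then for every d ∈ ℝⁿ and every r ∈ ℝ^{m−1}, there exists a unique pair of vectors (u, v) ∈ ℝᵐ × ℝᵐ satisfying K₀ u + K_L v = d and Γ₂′ (u + v) = r. In particular, the flux flow derivatives at all edge endpoints, including the flux derivative at the far end of the line attached to the balancing node, are uniquely determined by these equations alone, without reference to the density at the balancing node or its time derivative. -/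
open Matrix

namespace GasAux

open Finset

variable {n m : ℕ}

/-- Transport a predicate along the connected network. -/
lemma transport (T : TreeNetwork n m) (P : Fin n → Prop)
    (hP : ∀ j, P (T.tail j) ↔ P (T.head j)) {p q : Fin n} (hp : P p) : P q := by
  obtain ⟨w⟩ := T.isTree.isConnected.preconnected p q
  suffices H : ∀ {a b : Fin n}
      (_ : (SimpleGraph.fromEdgeSet (Set.range fun e => s(T.tail e, T.head e))).Walk a b),
      P a → P b from H w hp
  intro a b w
  induction w with
  | nil => exact id
  | cons h _ ih =>
    intro hpa
    apply ih
    rw [SimpleGraph.fromEdgeSet_adj] at h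
    obtain ⟨⟨j, hj⟩, -⟩ := h
    rw [Sym2.eq_iff] at hj
    rcases hj with ⟨h1, h2⟩ | ⟨h1, h2⟩
    · rw [← h2]; exact (hP j).mp (by rw [h1]; exact hpa)
    · rw [← h1]; exact (hP j).mpr (by rw [h2]; exact hpa)

/-- The signed incidence matrix of the tree (as node × edge) has trivial kernel. -/
lemma S_mulVec_inj (hn : 2 ≤ n) (hmn : n = m + 1) (T : TreeNetwork n m)
    {x : Fin m → ℝ}
    (hx : ∀ p, (∑ j, ((if T.tail j = p then (1:ℝ) else 0)
      - (if T.head j = p then 1 else 0)) * x j) = 0) :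
    x = 0 := by
  classical
  set S : Matrix (Fin n) (Fin m) ℝ := Matrix.of fun p j =>
    (if T.tail j = p then (1:ℝ) else 0) - (if T.head j = p then 1 else 0) with hS
  have p : Fin n := ⟨0, by omega⟩
  have hker : LinearMap.ker (Matrix.mulVecLin Sᵀ)
      = Submodule.span ℝ {(fun _ => 1 : Fin n → ℝ)} := by
    apply le_antisymm
    · intro f hf
      have hf' : ∀ j, f (T.tail j) = f (T.head j) := by
        intro j
        have h := congrFun (LinearMap.mem_ker.mp hf) j
        simp only [hS, Matrix.mulVecLin_apply, Matrix.mulVec, Matrix.vecMul, dotProduct,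
          Matrix.transpose_apply, Matrix.of_apply, sub_mul, mul_sub, ite_mul, mul_ite,
          mul_one, one_mul, mul_zero, zero_mul, Finset.sum_sub_distrib,
          Finset.sum_ite_eq, Finset.sum_ite_eq', Finset.mem_univ, if_true, Pi.zero_apply] at h
        linarith
      have hc : f = (f p) • (fun _ => (1:ℝ)) := by
        funext q
        have := transport T (fun z => f z = f p)
          (fun j => by show f (T.tail j) = f p ↔ f (T.head j) = f p; rw [hf' j])
          (p := p) rfl (q := q)
        simpa using this
      rw [hc]
      exact Submodule.smul_mem _ _ (Submodule.mem_span_singleton_self _)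
    · rw [Submodule.span_le, Set.singleton_subset_iff]
      refine LinearMap.mem_ker.mpr ?_
      funext j
      simp [hS, Matrix.mulVecLin_apply, Matrix.mulVec, Matrix.vecMul, dotProduct,
          Matrix.transpose_apply, Matrix.of_apply, sub_mul, mul_sub, ite_mul, mul_ite,
          mul_one, one_mul, mul_zero, zero_mul, Finset.sum_sub_distrib,
          Finset.sum_ite_eq, Finset.sum_ite_eq']
  have hone : (fun _ => (1:ℝ) : Fin n → ℝ) ≠ 0 := by
    intro h
    have := congrFun h p
    norm_num at this
  have hkdim : Module.finrank ℝ (LinearMap.ker (Matrix.mulVecLin Sᵀ)) = 1 := by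
    rw [hker]
    exact finrank_span_singleton hone
  have hrn := LinearMap.finrank_range_add_finrank_ker (Matrix.mulVecLin Sᵀ)
  have hpi : Module.finrank ℝ (Fin n → ℝ) = n := by
    simp [Module.finrank_pi]
  have hdefT : Sᵀ.rank = Module.finrank ℝ (LinearMap.range (Matrix.mulVecLin Sᵀ)) := rfl
  have hrankT : Sᵀ.rank = m := by
    have h' : Sᵀ.rank + 1 = n := by
      rw [hpi] at hrn
      rw [hdefT, ← hkdim]
      exact hrn
    omega
  have hrankS : S.rank = m := (Matrix.rank_transpose S).symm.trans hrankT
  have hrnS := LinearMap.finrank_range_add_finrank_ker (Matrix.mulVecLin S)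
  have hpim : Module.finrank ℝ (Fin m → ℝ) = m := by
    simp [Module.finrank_pi]
  have hdefS : S.rank = Module.finrank ℝ (LinearMap.range (Matrix.mulVecLin S)) := rfl
  have hkS : LinearMap.ker (Matrix.mulVecLin S) = ⊥ := by
    apply Submodule.finrank_eq_zero.mp
    have h2 : S.rank + Module.finrank ℝ (LinearMap.ker (Matrix.mulVecLin S)) = m := by
      rw [hpim] at hrnS
      rw [hdefS]
      exact hrnS
    omega
  have hx0 : Matrix.mulVecLin S x = 0 := by
    funext q
    simpa [hS, Matrix.mulVecLin_apply, Matrix.mulVec, dotProduct,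
      Matrix.of_apply] using hx q
  have hinj := LinearMap.ker_eq_bot.mp hkS
  exact hinj (by rw [hx0, map_zero])

/-- A nowhere-vanishing "bipartition" potential on the nodes of the tree. -/
lemma exists_sigma (hn : 2 ≤ n) (hmn : n = m + 1) (T : TreeNetwork n m) :
    ∃ σ : Fin n → ℝ, (∀ p, σ p ≠ 0) ∧ ∀ j, σ (T.tail j) + σ (T.head j) = 0 := by
  classical
  set B : Matrix (Fin m) (Fin n) ℝ := Matrix.of fun j p =>
    (if T.tail j = p then (1:ℝ) else 0) + (if T.head j = p then 1 else 0) with hB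
  have hne : LinearMap.ker B.mulVecLin ≠ ⊥ := by
    intro h
    have hinj : Function.Injective B.mulVecLin := LinearMap.ker_eq_bot.mp h
    have hle := LinearMap.finrank_le_finrank_of_injective hinj
    simp [Module.finrank_pi] at hle
    omega
  obtain ⟨σ, hσmem, hσne⟩ := (Submodule.ne_bot_iff _).mp hne
  have hedge : ∀ j, σ (T.tail j) + σ (T.head j) = 0 := by
    intro j
    have h := congrFun (LinearMap.mem_ker.mp hσmem) j
    simp only [hB, Matrix.mulVecLin_apply, Matrix.mulVec, Matrix.vecMul, dotProduct,
          Matrix.transpose_apply, Matrix.of_apply, sub_mul, mul_sub, ite_mul, mul_ite,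
          mul_one, one_mul, mul_zero, zero_mul, Finset.sum_sub_distrib,
          Finset.sum_ite_eq, Finset.sum_ite_eq', add_mul, mul_add,
      Finset.sum_add_distrib, Pi.zero_apply, Finset.mem_univ, if_true] at h
    linarith
  refine ⟨σ, ?_, hedge⟩
  intro q
  obtain ⟨p0, hp0⟩ : ∃ p, σ p ≠ 0 := by
    by_contra h
    push_neg at h
    exact hσne (funext h)
  exact transport T (fun z => σ z ≠ 0)
    (fun j => ⟨fun h hc => h (by linarith [hedge j]),
               fun h hc => h (by linarith [hedge j])⟩) hp0

/-- Core injectivity: the homogeneous system forces `u = v = 0`. -/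
lemma core (hn : 2 ≤ n) (hmn : n = m + 1) (T : TreeNetwork n m) (A : Fin m → ℝ)
    (hA : ∀ j, 0 < A j) (i : Fin m) (u v : Fin m → ℝ)
    (h1 : (T.K0 A).mulVec u + (T.KL A).mulVec v = 0)
    (h2 : ∀ e, e ≠ i → u e + v e = 0) : u = 0 ∧ v = 0 := by
  classical
  obtain ⟨σ, hσ0, hσe⟩ := exists_sigma hn hmn T
  have hnode : ∀ p, (∑ j, (if T.tail j = p then A j else 0) * u j)
      + ∑ j, (if T.head j = p then -A j else 0) * v j = 0 := by
    intro p
    have h := congrFun h1 p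
    simpa [TreeNetwork.K0, TreeNetwork.KL, Matrix.mulVec, dotProduct] using h
  have key1 : ∑ p, σ p * ((∑ j, (if T.tail j = p then A j else 0) * u j)
      + ∑ j, (if T.head j = p then -A j else 0) * v j)
      = A i * σ (T.tail i) * (u i + v i) := by
    have e1 : ∀ p, σ p * ((∑ j, (if T.tail j = p then A j else 0) * u j)
        + ∑ j, (if T.head j = p then -A j else 0) * v j)
        = ∑ j, (σ p * ((if T.tail j = p then A j else 0) * u j)
          + σ p * ((if T.head j = p then -A j else 0) * v j)) := by
      intro p
      rw [Finset.sum_add_distrib, ← Finset.mul_sum, ← Finset.mul_sum, mul_add]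
    calc ∑ p, σ p * ((∑ j, (if T.tail j = p then A j else 0) * u j)
          + ∑ j, (if T.head j = p then -A j else 0) * v j)
        = ∑ p, ∑ j, (σ p * ((if T.tail j = p then A j else 0) * u j)
          + σ p * ((if T.head j = p then -A j else 0) * v j)) :=
          Finset.sum_congr rfl fun p _ => e1 p
      _ = ∑ j, ∑ p, (σ p * ((if T.tail j = p then A j else 0) * u j)
          + σ p * ((if T.head j = p then -A j else 0) * v j)) := Finset.sum_comm
      _ = ∑ j, (σ (T.tail j) * (A j * u j) + σ (T.head j) * (-A j * v j)) := by
          refine Finset.sum_congr rfl fun j _ => ?_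
          rw [Finset.sum_add_distrib]
          congr 1
          · simp [mul_ite, ite_mul, Finset.sum_ite_eq]
          · simp [mul_ite, ite_mul, Finset.sum_ite_eq]
      _ = ∑ j, σ (T.tail j) * A j * (u j + v j) := by
          refine Finset.sum_congr rfl fun j _ => ?_
          have hh : σ (T.head j) = - σ (T.tail j) := by linarith [hσe j]
          rw [hh]; ring
      _ = A i * σ (T.tail i) * (u i + v i) := by
          rw [Finset.sum_eq_single i]
          · ring
          · intro b _ hb
            rw [h2 b hb, mul_zero]
          · intro h
            exact absurd (Finset.mem_univ i) h
  have key0 : ∑ p, σ p * ((∑ j, (if T.tail j = p then A j else 0) * u j)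
      + ∑ j, (if T.head j = p then -A j else 0) * v j) = 0 :=
    Finset.sum_eq_zero fun p _ => by rw [hnode p, mul_zero]
  have hsi : u i + v i = 0 := by
    have hz : A i * σ (T.tail i) * (u i + v i) = 0 := by rw [← key1, key0]
    rcases mul_eq_zero.mp hz with h | h
    · rcases mul_eq_zero.mp h with h' | h'
      · exact absurd h' (ne_of_gt (hA i))
      · exact absurd h' (hσ0 (T.tail i))
    · exact h
  have huv : ∀ e, v e = - u e := by
    intro e
    by_cases he : e = i
    · subst he; linarith
    · linarith [h2 e he]
  have hx : ∀ p, (∑ j, ((if T.tail j = p then (1:ℝ) else 0)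
      - (if T.head j = p then 1 else 0)) * (σ (T.tail j) * (A j * u j))) = 0 := by
    intro p
    have hn2 : (∑ j, (if T.tail j = p then (1:ℝ) else 0) * (A j * u j))
        + (∑ j, (if T.head j = p then (1:ℝ) else 0) * (A j * u j)) = 0 := by
      have e1 : ∀ j, (if T.tail j = p then A j else 0) * u j
          = (if T.tail j = p then (1:ℝ) else 0) * (A j * u j) := by
        intro j; by_cases h : T.tail j = p <;> simp [h]
      have e2 : ∀ j, (if T.head j = p then -A j else 0) * v j
          = (if T.head j = p then (1:ℝ) else 0) * (A j * u j) := by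
        intro j
        rw [huv j]
        by_cases h : T.head j = p <;> simp [h] <;> ring
      have := hnode p
      rw [Finset.sum_congr rfl fun j _ => e1 j, Finset.sum_congr rfl fun j _ => e2 j] at this
      exact this
    have hterm : ∀ j, ((if T.tail j = p then (1:ℝ) else 0)
        - (if T.head j = p then 1 else 0)) * σ (T.tail j)
        = σ p * ((if T.tail j = p then (1:ℝ) else 0) + (if T.head j = p then 1 else 0)) := by
      intro j
      by_cases ht : T.tail j = p <;> by_cases hh : T.head j = p
      · exact absurd (ht.trans hh.symm) (T.tail_ne_head j)
      · simp [ht, hh]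
      · simp only [if_neg ht, if_pos hh]
        rw [← hh]
        simp only [sub_mul, one_mul, zero_sub, zero_add, mul_one]
        linarith [hσe j]
      · simp [ht, hh]
    calc (∑ j, ((if T.tail j = p then (1:ℝ) else 0)
          - (if T.head j = p then 1 else 0)) * (σ (T.tail j) * (A j * u j)))
        = ∑ j, σ p * (((if T.tail j = p then (1:ℝ) else 0)
          + (if T.head j = p then 1 else 0)) * (A j * u j)) := by
          refine Finset.sum_congr rfl fun j _ => ?_
          rw [← mul_assoc, hterm j, mul_assoc]
      _ = σ p * ((∑ j, (if T.tail j = p then (1:ℝ) else 0) * (A j * u j))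
          + (∑ j, (if T.head j = p then (1:ℝ) else 0) * (A j * u j))) := by
          rw [← Finset.mul_sum, ← Finset.sum_add_distrib]
          congr 1
          refine Finset.sum_congr rfl fun j _ => ?_
          ring
      _ = 0 := by rw [hn2, mul_zero]
  have hx0 := S_mulVec_inj hn hmn T hx
  have hu : u = 0 := by
    funext j
    have h := congrFun hx0 j
    simp only [Pi.zero_apply] at h
    rcases mul_eq_zero.mp h with h' | h'
    · exact absurd h' (hσ0 (T.tail j))
    · rcases mul_eq_zero.mp h' with h'' | h''
      · exact absurd h'' (ne_of_gt (hA j))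
      · exact h''
  refine ⟨hu, ?_⟩
  funext e
  simp [huv e, congrFun hu e]

end GasAux

/-- Theorem 5 of the paper. For any edge `i` (the line attached to
the balancing node), any nodal injection-derivative vector `d ∈ ℝⁿ`, and any
right-hand side `r ∈ ℝ^{m−1}` for the remaining momentum equations, there is a unique
pair `(u, v)` of beginning-side and ending-side flux-derivative vectors satisfying
`K₀ u + K_L v = d` and `Γ₂′ (u + v) = r`, where `Γ₂′` is `Γ₂` with row `i` deleted.
In particular, all flux flow derivatives — including the one at the far end of the
line attached to the balancing node — are determined by these equations alone,
without reference to the balancing node's density or its time derivative. -/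
theorem flux_derivatives_unique_without_balancing_density
    (n m : ℕ) (hn : 2 ≤ n) (hm : m = n - 1)
    (T : TreeNetwork n m) (A l : Fin m → ℝ)
    (hA : ∀ j, 0 < A j) (hl : ∀ e, 0 < l e)
    (i : Fin m) (d : Fin n → ℝ) (r : {e : Fin m // e ≠ i} → ℝ) :
    ∃! uv : (Fin m → ℝ) × (Fin m → ℝ),
      (T.K0 A).mulVec uv.1 + (T.KL A).mulVec uv.2 = d ∧
      ((TreeNetwork.Gamma2 l).submatrix
        (Subtype.val : {e : Fin m // e ≠ i} → Fin m) id).mulVec (uv.1 + uv.2) = r := by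
  classical
  have hm1 : 1 ≤ m := by omega
  have hmn : n = m + 1 := by omega
  set G2 : Matrix {e : Fin m // e ≠ i} (Fin m) ℝ :=
    (TreeNetwork.Gamma2 l).submatrix (Subtype.val : {e : Fin m // e ≠ i} → Fin m) id with hG2
  let L : ((Fin m → ℝ) × (Fin m → ℝ)) →ₗ[ℝ] ((Fin n → ℝ) × ({e : Fin m // e ≠ i} → ℝ)) :=
  { toFun := fun uv => ((T.K0 A).mulVec uv.1 + (T.KL A).mulVec uv.2,
      G2.mulVec (uv.1 + uv.2))
    map_add' := by
      intro a b
      refine Prod.ext ?_ ?_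
      · show (T.K0 A).mulVec (a.1 + b.1) + (T.KL A).mulVec (a.2 + b.2) = _
        simp only [Matrix.mulVec_add, Prod.fst_add, Prod.snd_add]
        abel
      · show G2.mulVec ((a.1 + b.1) + (a.2 + b.2)) = _
        have : (a.1 + b.1) + (a.2 + b.2) = (a.1 + a.2) + (b.1 + b.2) := by abel
        simp only [Prod.snd_add, this, Matrix.mulVec_add]
    map_smul' := by
      intro c a
      refine Prod.ext ?_ ?_
      · show (T.K0 A).mulVec (c • a.1) + (T.KL A).mulVec (c • a.2) = _
        simp [Matrix.mulVec_smul, smul_add]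
      · show G2.mulVec (c • a.1 + c • a.2) = _
        rw [← smul_add, Matrix.mulVec_smul]
        rfl }
  have hinj : Function.Injective L := by
    intro a b hab
    have hz : L (a - b) = 0 := by rw [map_sub, hab, sub_self]
    have hz1 : (T.K0 A).mulVec (a.1 - b.1) + (T.KL A).mulVec (a.2 - b.2) = 0 :=
      congrArg Prod.fst hz
    have hz2 : G2.mulVec ((a.1 - b.1) + (a.2 - b.2)) = 0 :=
      congrArg Prod.snd hz
    have h2 : ∀ e, e ≠ i → (a.1 - b.1) e + (a.2 - b.2) e = 0 := by
      intro e he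
      have h := congrFun hz2 ⟨e, he⟩
      simp [hG2, TreeNetwork.Gamma2, Matrix.mulVec, dotProduct,
        Matrix.submatrix_apply, Matrix.diagonal, ite_mul, Finset.sum_ite_eq] at h
      rcases h with h | h
      · exact absurd h (ne_of_gt (hl e))
      · simpa using h
    obtain ⟨hu, hv⟩ := GasAux.core hn hmn T A hA i _ _ hz1 h2
    have h1 : a.1 = b.1 := by
      have := sub_eq_zero.mp hu; exact this
    have hv2 : a.2 = b.2 := by
      have := sub_eq_zero.mp hv; exact this
    exact Prod.ext h1 hv2
  have hsurj : Function.Surjective L := by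
    rw [← LinearMap.range_eq_top]
    apply Submodule.eq_top_of_finrank_eq
    rw [LinearMap.finrank_range_of_inj hinj]
    have hc : Fintype.card {e : Fin m // e ≠ i} = m - 1 := by
      have : Fintype.card {e : Fin m // e = i} = 1 := Fintype.card_subtype_eq i
      have h2 := Fintype.card_subtype_compl (fun e : Fin m => e = i)
      simp only [this, Fintype.card_fin] at h2
      exact h2
    simp only [Module.finrank_prod, Module.finrank_pi, Fintype.card_fin, hc]
    omega
  obtain ⟨uv, huv⟩ := hsurj (d, r)
  refine ⟨uv, ⟨?_, ?_⟩, ?_⟩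
  · exact congrArg Prod.fst huv
  · exact congrArg Prod.snd huv
  · intro y hy
    apply hinj
    rw [huv]
    exact Prod.ext hy.1 hy.2
end
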